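/- Proposition 7(2): Fix π₀ ∈ (0,1). With W_n(γ, κ) as defined in the context: (i) for n = 0 and every fixed κ > 1, the map γ ↦ W_0(γ, κ) is strictly decreasing on (1, ∞); (ii) for every n ≥ 1 there exists γ̂ = γ̂(n) > 1 such that for every κ > 1, the map γ ↦ W_n(γ, κ) is strictly increasing on (γ̂, ∞); moreover γ̂(n) can be chosen so that γ̂(n) → 1 as n → ∞. -/

import Mathlib

/-!
Writing `t = (κ - 1)/κ = p + q ∈ (0, 1)`, one has `1 - 4pq = ((γ + 1)² - 4t²γ)/(γ + 1)²`, so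
`W_n = 1/(1 + c·G_n(γ))` with `c = (1 - π₀)/π₀ > 0` and the explicit odds factor
`G_n(γ) = (S + 2tγ - γ - 1)/((S + 2t - γ - 1)·γ^(n+1))`, `S = √((γ + 1)² - 4t²γ)`.
A direct computation gives `G_n'(γ) = (positive) · ((γ + 1)² + 4tγ - (2n + 1)(γ + 1)S)`.
For `n = 0` this is positive because `S < γ + 1`; for `n ≥ 1` it is negative as soon as
`(2n + 1)S > 2(γ + 1)`, which follows from `S > γ - 1` once `γ > 1 + 4/n`.
Since `x ↦ 1/(1 + c x)` is decreasing, `W_0` decreases and `W_n` increases on these ranges.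
-/

/-- The sender's equilibrium value `V_n` reparametrized by the signal
informativeness `γ = p/q` and the expected evidence length `κ = 1/(1−p−q)`,
via `p = γ(κ−1)/((γ+1)κ)`, `q = (κ−1)/((γ+1)κ)`. -/
noncomputable def W (π0 : ℝ) (n : ℕ) (γ κ : ℝ) : ℝ :=
  let p := γ * (κ - 1) / ((γ + 1) * κ)
  let q := (κ - 1) / ((γ + 1) * κ)
  let α := (1 - Real.sqrt (1 - 4 * p * q)) / 2
  1 / (1 + ((1 - π0) / π0) * ((p - α) / (q - α)) * γ ^ (-(n + 1 : ℤ)))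

open Real Set Filter

noncomputable def sqrtDisc (t γ : ℝ) : ℝ := √((γ + 1) ^ 2 - 4 * t ^ 2 * γ)

noncomputable def oddsFactor (t : ℝ) (n : ℕ) (γ : ℝ) : ℝ :=
  (sqrtDisc t γ + 2 * t * γ - γ - 1) / ((sqrtDisc t γ + 2 * t - γ - 1) * γ ^ (n + 1))

noncomputable def oddsFactorDerivNum (t : ℝ) (n : ℕ) (γ : ℝ) : ℝ :=
  (γ + 1) ^ 2 + 4 * t * γ - (2 * n + 1) * (γ + 1) * sqrtDisc t γ

variable {t γ : ℝ}

lemma sqrtDisc_radicand_pos (ht : t ^ 2 < 1) (hγ : 0 < γ) : 0 < (γ + 1) ^ 2 - 4 * t ^ 2 * γ := by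
  have h : (γ + 1) ^ 2 - 4 * t ^ 2 * γ = (γ - 1) ^ 2 + 4 * (γ * (1 - t ^ 2)) := by ring
  rw [h]
  have := mul_pos hγ (sub_pos.2 ht)
  positivity

lemma sqrtDisc_sq (ht : t ^ 2 < 1) (hγ : 0 < γ) :
    sqrtDisc t γ ^ 2 = (γ + 1) ^ 2 - 4 * t ^ 2 * γ :=
  sq_sqrt (sqrtDisc_radicand_pos ht hγ).le

lemma sqrtDisc_pos (ht : t ^ 2 < 1) (hγ : 0 < γ) : 0 < sqrtDisc t γ :=
  sqrt_pos.2 (sqrtDisc_radicand_pos ht hγ)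

lemma sub_one_lt_sqrtDisc (ht : t ^ 2 < 1) (hγ : 0 < γ) : γ - 1 < sqrtDisc t γ :=
  lt_sqrt_of_sq_lt (by nlinarith)

lemma sqrtDisc_lt (ht : t ≠ 0) (hγ : 0 < γ) : sqrtDisc t γ < γ + 1 :=
  (sqrt_lt' (by linarith)).2 <| by
    have : 0 < t ^ 2 * γ := by positivity
    linarith

lemma sqrtDisc_add_two_mul_sub_pos (ht0 : 0 < t) (ht1 : t < 1) (hγ : 0 < γ) :
    0 < sqrtDisc t γ + 2 * t - γ - 1 := by
  have : γ + 1 - 2 * t < sqrtDisc t γ :=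
    lt_sqrt_of_sq_lt (by nlinarith [mul_pos (mul_pos ht0 (sub_pos.2 ht1)) (add_pos hγ one_pos)])
  linarith

lemma sqrtDisc_add_two_mul_mul_sub_pos (ht0 : 0 < t) (ht1 : t < 1) (hγ : 0 < γ) :
    0 < sqrtDisc t γ + 2 * t * γ - γ - 1 := by
  have : γ + 1 - 2 * t * γ < sqrtDisc t γ :=
    lt_sqrt_of_sq_lt (by
      nlinarith [mul_pos (mul_pos (mul_pos ht0 (sub_pos.2 ht1)) (add_pos hγ one_pos)) hγ])
  linarith

lemma oddsFactor_pos (ht0 : 0 < t) (ht1 : t < 1) (hγ : 0 < γ) (n : ℕ) : 0 < oddsFactor t n γ :=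
  div_pos (sqrtDisc_add_two_mul_mul_sub_pos ht0 ht1 hγ)
    (mul_pos (sqrtDisc_add_two_mul_sub_pos ht0 ht1 hγ) (pow_pos hγ _))

lemma hasDerivAt_sqrtDisc (ht : t ^ 2 < 1) (hγ : 0 < γ) :
    HasDerivAt (sqrtDisc t) ((γ + 1 - 2 * t ^ 2) / sqrtDisc t γ) γ := by
  have h : HasDerivAt (fun x => (x + 1) ^ 2 - 4 * t ^ 2 * x) (2 * (γ + 1) - 4 * t ^ 2) γ := by
    simpa using (((hasDerivAt_id γ).add_const 1).fun_pow 2).fun_sub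
      ((hasDerivAt_id γ).const_mul (4 * t ^ 2))
  refine (h.sqrt (sqrtDisc_radicand_pos ht hγ).ne').congr_deriv ?_
  have := (sqrtDisc_pos ht hγ).ne'
  unfold sqrtDisc at this ⊢
  field_simp
  ring

/-- The quotient-rule numerator of `oddsFactor t n`, multiplied by `s * (γ + 1 + s)` and divided
by `γ ^ n`, where `s = sqrtDisc t γ`. -/
lemma oddsFactor_deriv_identity (s t γ : ℝ) (n : ℕ) (hs : s ^ 2 = (γ + 1) ^ 2 - 4 * t ^ 2 * γ) :
    (γ + 1 + s) * ((γ + 1 - 2 * t ^ 2 + (2 * t - 1) * s) * (s + 2 * t - γ - 1) * γ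
      - (s + 2 * t * γ - γ - 1) * ((γ + 1 - 2 * t ^ 2 - s) * γ + (n + 1) * (s + 2 * t - γ - 1) * s))
      = 4 * t ^ 2 * (1 - t) * γ * ((γ + 1) ^ 2 + 4 * t * γ - (2 * n + 1) * (γ + 1) * s) := by
  linear_combination (-(n + 1) * s ^ 2 + ((n + 1) * (γ + 1) - 2 * t * (n * γ + n + 1)) * s
    + 2 * t * γ * (γ + 2 * t - 1)) * hs

lemma exists_pos_hasDerivAt_oddsFactor (ht0 : 0 < t) (ht1 : t < 1) (hγ : 0 < γ) (n : ℕ) :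
    ∃ c, 0 < c ∧ HasDerivAt (oddsFactor t n) (c * oddsFactorDerivNum t n γ) γ := by
  have ht : t ^ 2 < 1 := by nlinarith
  have hS := hasDerivAt_sqrtDisc ht hγ
  have hA : HasDerivAt (fun x => sqrtDisc t x + 2 * t * x - x - 1)
      ((γ + 1 - 2 * t ^ 2) / sqrtDisc t γ + 2 * t - 1) γ := by
    simpa using ((hS.add ((hasDerivAt_id γ).const_mul (2 * t))).sub (hasDerivAt_id γ)).sub_const 1
  have hB : HasDerivAt (fun x => (sqrtDisc t x + 2 * t - x - 1) * x ^ (n + 1))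
      (((γ + 1 - 2 * t ^ 2) / sqrtDisc t γ - 1) * γ ^ (n + 1)
        + (sqrtDisc t γ + 2 * t - γ - 1) * ((n + 1 : ℕ) * γ ^ n)) γ := by
    refine HasDerivAt.mul ?_ (hasDerivAt_pow (n + 1) γ)
    simpa using ((hS.add_const (2 * t)).sub (hasDerivAt_id γ)).sub_const 1
  have hs := sqrtDisc_pos ht hγ
  have hB0 := sqrtDisc_add_two_mul_sub_pos ht0 ht1 hγ
  have h1t : 0 < 1 - t := sub_pos.2 ht1
  refine ⟨4 * t ^ 2 * (1 - t) / (sqrtDisc t γ * (γ + 1 + sqrtDisc t γ)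
      * (sqrtDisc t γ + 2 * t - γ - 1) ^ 2 * γ ^ (n + 1)), by positivity,
    (hA.div hB (by positivity)).congr_deriv ?_⟩
  have key := oddsFactor_deriv_identity (sqrtDisc t γ) t γ n (sqrtDisc_sq ht hγ)
  unfold oddsFactorDerivNum
  field_simp
  push_cast
  linear_combination γ ^ n * key

lemma oddsFactorDerivNum_zero_pos (ht : 0 < t) (hγ : 0 < γ) : 0 < oddsFactorDerivNum t 0 γ := by
  have := mul_pos (add_pos hγ one_pos) (sub_pos.2 (sqrtDisc_lt ht.ne' hγ))
  unfold oddsFactorDerivNum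
  push_cast
  nlinarith [mul_pos ht hγ]

lemma oddsFactorDerivNum_neg {n : ℕ} (ht0 : 0 < t) (ht1 : t < 1) (hγ : 0 < γ)
    (hn : 2 * (γ + 1) ≤ (2 * n + 1) * (γ - 1)) : oddsFactorDerivNum t n γ < 0 := by
  have ht : t ^ 2 < 1 := by nlinarith
  have hS := sub_one_lt_sqrtDisc ht hγ
  have h4 : 4 * t * γ < (γ + 1) ^ 2 := by nlinarith [sq_nonneg (γ - 1), mul_pos (sub_pos.2 ht1) hγ]
  have h2 : 2 * (γ + 1) < (2 * n + 1) * sqrtDisc t γ := by nlinarith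
  unfold oddsFactorDerivNum
  nlinarith

lemma differentiableAt_oddsFactor (ht0 : 0 < t) (ht1 : t < 1) (hγ : 0 < γ) (n : ℕ) :
    DifferentiableAt ℝ (oddsFactor t n) γ :=
  let ⟨_, _, h⟩ := exists_pos_hasDerivAt_oddsFactor ht0 ht1 hγ n
  h.differentiableAt

lemma oddsFactor_zero_strictMonoOn (ht0 : 0 < t) (ht1 : t < 1) :
    StrictMonoOn (oddsFactor t 0) (Ioi 0) := by
  refine strictMonoOn_of_deriv_pos (convex_Ioi 0)
    (fun γ hγ => (differentiableAt_oddsFactor ht0 ht1 hγ 0).continuousAt.continuousWithinAt)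
    (fun γ hγ => ?_)
  rw [interior_Ioi] at hγ
  obtain ⟨c, hc, hd⟩ := exists_pos_hasDerivAt_oddsFactor ht0 ht1 hγ 0
  rw [hd.deriv]
  exact mul_pos hc (oddsFactorDerivNum_zero_pos ht0 hγ)

lemma oddsFactor_strictAntiOn {n : ℕ} (hn : 1 ≤ n) (ht0 : 0 < t) (ht1 : t < 1) :
    StrictAntiOn (oddsFactor t n) (Ioi (1 + 4 / n)) := by
  have hpos : ∀ γ ∈ Ioi (1 + 4 / (n : ℝ)), 0 < γ := fun γ hγ =>
    (by positivity : (0 : ℝ) < 1 + 4 / n).trans hγ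
  refine strictAntiOn_of_deriv_neg (convex_Ioi _) (fun γ hγ =>
      (differentiableAt_oddsFactor ht0 ht1 (hpos γ hγ) n).continuousAt.continuousWithinAt)
    (fun γ hγ => ?_)
  rw [interior_Ioi] at hγ
  obtain ⟨c, hc, hd⟩ := exists_pos_hasDerivAt_oddsFactor ht0 ht1 (hpos γ hγ) n
  rw [hd.deriv]
  refine mul_neg_of_pos_of_neg hc (oddsFactorDerivNum_neg ht0 ht1 (hpos γ hγ) ?_)
  have hn' : (1 : ℝ) ≤ n := by exact_mod_cast hn
  have : 4 < n * (γ - 1) := (div_lt_iff₀' (by positivity)).1 (lt_sub_iff_add_lt'.2 hγ)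
  nlinarith

lemma sub_one_div_self_mem_Ioo {κ : ℝ} (hκ : 1 < κ) : 0 < (κ - 1) / κ ∧ (κ - 1) / κ < 1 :=
  ⟨div_pos (by linarith) (by linarith), (div_lt_one (by linarith)).2 (by linarith)⟩

lemma W_eqOn (π0 : ℝ) (n : ℕ) {κ : ℝ} (hκ : 1 < κ) :
    EqOn (fun γ => W π0 n γ κ)
      ((fun x => 1 / (1 + (1 - π0) / π0 * x)) ∘ oddsFactor ((κ - 1) / κ) n) (Ioi 0) := by
  intro γ (hγ : 0 < γ)
  have hκ0 : 0 < κ := by linarith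
  obtain ⟨ht0, ht1⟩ := sub_one_div_self_mem_Ioo hκ
  set t := (κ - 1) / κ with ht
  have hp : γ * (κ - 1) / ((γ + 1) * κ) = γ * t / (γ + 1) := by rw [ht]; field_simp
  have hq : (κ - 1) / ((γ + 1) * κ) = t / (γ + 1) := by rw [ht]; field_simp
  have hsqrt : √(1 - 4 * (γ * t / (γ + 1)) * (t / (γ + 1))) = sqrtDisc t γ / (γ + 1) := by
    have hrad : 1 - 4 * (γ * t / (γ + 1)) * (t / (γ + 1))
        = ((γ + 1) ^ 2 - 4 * t ^ 2 * γ) / (γ + 1) ^ 2 := by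
      field_simp
    rw [hrad, sqrt_div (sqrtDisc_radicand_pos (by nlinarith) hγ).le, sqrt_sq (by positivity),
      sqrtDisc]
  have hB := sqrtDisc_add_two_mul_sub_pos ht0 ht1 hγ
  have hpow : γ ^ (-(n + 1 : ℤ)) = (γ ^ (n + 1))⁻¹ := by
    rw [← zpow_natCast, ← zpow_neg]
    push_cast
    rfl
  simp only [W, hp, hq, hsqrt, hpow, oddsFactor, Function.comp_apply]
  congr 2
  field_simp
  ring

lemma strictAntiOn_one_div_one_add_mul {c : ℝ} (hc : 0 < c) :
    StrictAntiOn (fun x => 1 / (1 + c * x)) (Ioi 0) := by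
  intro x (hx : 0 < x) y _ hxy
  exact one_div_lt_one_div_of_lt (by positivity) (by gcongr)

/-- Proposition 7(2): (i) for `n = 0` the value is strictly decreasing in the
informativeness `γ` on `(1, ∞)` for every `κ > 1`; (ii) for every `n ≥ 1`
there is a threshold `γ̂(n) > 1` such that for every `κ > 1` the value is
strictly increasing in `γ` on `(γ̂(n), ∞)`, and the thresholds can be chosen
with `γ̂(n) → 1` as `n → ∞`. -/
theorem stmt_18 (π0 : ℝ) (h0 : 0 < π0) (h1 : π0 < 1) :
    (∀ κ : ℝ, 1 < κ → StrictAntiOn (fun γ => W π0 0 γ κ) (Set.Ioi (1 : ℝ))) ∧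
    ∃ γhat : ℕ → ℝ,
      (∀ n : ℕ, 1 ≤ n → 1 < γhat n ∧
        ∀ κ : ℝ, 1 < κ → StrictMonoOn (fun γ => W π0 n γ κ) (Set.Ioi (γhat n))) ∧
      Filter.Tendsto γhat Filter.atTop (nhds 1) := by
  have hc : 0 < (1 - π0) / π0 := div_pos (by linarith) h0
  have hmaps : ∀ n κ, 1 < κ → MapsTo (oddsFactor ((κ - 1) / κ) n) (Ioi 0) (Ioi 0) :=
    fun n κ hκ γ hγ =>
      oddsFactor_pos (sub_one_div_self_mem_Ioo hκ).1 (sub_one_div_self_mem_Ioo hκ).2 hγ n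
  refine ⟨fun κ hκ => ?_, fun n => 1 + 4 / n, fun n hn => ⟨?_, fun κ hκ => ?_⟩, ?_⟩
  · obtain ⟨ht0, ht1⟩ := sub_one_div_self_mem_Ioo hκ
    exact (((strictAntiOn_one_div_one_add_mul hc).comp_strictMonoOn
      (oddsFactor_zero_strictMonoOn ht0 ht1) (hmaps 0 κ hκ)).congr (W_eqOn π0 0 hκ).symm).mono
      (Ioi_subset_Ioi zero_le_one)
  · have : (0 : ℝ) < n := by exact_mod_cast hn
    simp only [lt_add_iff_pos_right]
    positivity
  · obtain ⟨ht0, ht1⟩ := sub_one_div_self_mem_Ioo hκ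
    have hsub : Ioi (1 + 4 / (n : ℝ)) ⊆ Ioi 0 := Ioi_subset_Ioi (by positivity)
    exact ((strictAntiOn_one_div_one_add_mul hc).comp (oddsFactor_strictAntiOn hn ht0 ht1)
      ((hmaps n κ hκ).mono_left hsub)).congr ((W_eqOn π0 n hκ).mono hsub).symm
  · simpa using (tendsto_const_div_atTop_nhds_zero_nat 4).const_add (1 : ℝ)
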